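/- Let 0 < ε < 1 and let g₀ > 0 be the unique positive real satisfying g₀·Q(g₀/√(2π)) = (1 − ε)·exp(−g₀²/(4π)). Suppose g ≥ g₀ and q > 0 satisfies g·exp(q²/2)·Q(q) = 1 − ε. Then g/√(2π) ≤ q ≤ g/((1 − ε)·√(2π)). -/

import Mathlib

/-!
Write `R x = exp (x²/2) * Q x` for the Mills ratio. Differentiating the tail integral gives
`R' = x R - 1/√(2π)`, and the classical Gaussian tail bounds read
`x²/(1+x²) ≤ √(2π) x R x < 1` for `x > 0`. Hence `R` is strictly decreasing on `[0, ∞)` and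
`ψ t = t R (t/√(2π))` tends to `1`.

The defining equation of `g₀` says `ψ g₀ = 1 - ε`. As `ψ → 1 > 1 - ε`, a value `ψ g < 1 - ε`
would produce, by the intermediate value theorem, a root `c ≥ g ≥ g₀`, forcing `g = g₀`; so
`g R (g/√(2π)) = ψ g ≥ 1 - ε = g R q`, and monotonicity of `R` gives `g/√(2π) ≤ q`.
The upper bound is `q R q < 1/√(2π)` multiplied by `g`.
-/

open MeasureTheory Real

/-- The standard Gaussian tail probability `Q x = (1/√(2π)) ∫ₓ^∞ exp(-u²/2) du`. -/
noncomputable def Q (x : ℝ) : ℝ :=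
  (Real.sqrt (2 * π))⁻¹ * ∫ u in Set.Ioi x, Real.exp (-u^2/2)

open Set Filter Topology

noncomputable def gaussianTail (x : ℝ) : ℝ := ∫ u in Ioi x, exp (-u ^ 2 / 2)

lemma integrable_exp_neg_sq_div_two : Integrable fun u : ℝ ↦ exp (-u ^ 2 / 2) := by
  convert integrable_exp_neg_mul_sq (b := 1 / 2) one_half_pos using 3
  ring

lemma tendsto_exp_neg_sq_div_two : Tendsto (fun u : ℝ ↦ exp (-u ^ 2 / 2)) atTop (𝓝 0) :=
  tendsto_exp_atBot.comp <| by
    simpa [neg_div] using (tendsto_pow_atTop two_ne_zero).atTop_div_const (two_pos : (0 : ℝ) < 2)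

lemma hasDerivAt_exp_neg_sq_div_two (x : ℝ) :
    HasDerivAt (fun u ↦ exp (-u ^ 2 / 2)) (-x * exp (-x ^ 2 / 2)) x := by
  convert (((hasDerivAt_pow 2 x).fun_neg).div_const 2).exp using 1
  ring

lemma gaussianTail_pos (x : ℝ) : 0 < gaussianTail x := by
  rw [gaussianTail, setIntegral_pos_iff_support_of_nonneg_ae
    (.of_forall fun u ↦ (exp_pos _).le) integrable_exp_neg_sq_div_two.integrableOn]
  simp [Function.support, exp_ne_zero]

lemma hasDerivAt_gaussianTail (x : ℝ) :
    HasDerivAt gaussianTail (-exp (-x ^ 2 / 2)) x := by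
  have hcont : Continuous fun u : ℝ ↦ exp (-u ^ 2 / 2) := by fun_prop
  have hint (a : ℝ) : IntegrableOn (fun u : ℝ ↦ exp (-u ^ 2 / 2)) (Ioi a) :=
    integrable_exp_neg_sq_div_two.integrableOn
  have hsplit : gaussianTail = fun y ↦ gaussianTail 0 - ∫ u in 0..y, exp (-u ^ 2 / 2) := by
    ext y
    rw [← intervalIntegral.integral_Ioi_sub_Ioi' (hint 0) (hint y), gaussianTail, gaussianTail]
    ring
  rw [hsplit]
  exact (hcont.integral_hasStrictDerivAt 0 x).hasDerivAt.const_sub _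

lemma mul_gaussianTail_lt {x : ℝ} (hx : 0 < x) : x * gaussianTail x < exp (-x ^ 2 / 2) := by
  have hderiv (u : ℝ) (_ : u ∈ Ici x) :
      HasDerivAt (fun v ↦ -exp (-v ^ 2 / 2)) (u * exp (-u ^ 2 / 2)) u := by
    simpa using (hasDerivAt_exp_neg_sq_div_two u).fun_neg
  have hnonneg (u : ℝ) (hu : u ∈ Ioi x) : 0 ≤ u * exp (-u ^ 2 / 2) :=
    mul_nonneg (hx.trans hu).le (exp_pos _).le
  have hlim : Tendsto (fun v ↦ -exp (-v ^ 2 / 2)) atTop (𝓝 0) := by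
    simpa using tendsto_exp_neg_sq_div_two.neg
  have hmoment := integral_Ioi_of_hasDerivAt_of_nonneg' hderiv hnonneg hlim
  have hmomentInt := integrableOn_Ioi_deriv_of_nonneg' hderiv hnonneg hlim
  have hexpInt := integrable_exp_neg_sq_div_two.integrableOn (s := Ioi x) |>.const_mul x
  have hgapInt : IntegrableOn (fun u ↦ u * exp (-u ^ 2 / 2) - x * exp (-u ^ 2 / 2)) (Ioi x) :=
    hmomentInt.sub hexpInt
  have hgap : 0 < ∫ u in Ioi x, (u * exp (-u ^ 2 / 2) - x * exp (-u ^ 2 / 2)) := by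
    rw [setIntegral_pos_iff_support_of_nonneg_ae _ hgapInt]
    · have : (Function.support fun u ↦ u * exp (-u ^ 2 / 2) - x * exp (-u ^ 2 / 2)) ∩ Ioi x
          = Ioi x := by
        ext u
        simp only [Function.mem_support, mem_inter_iff, mem_Ioi, ← sub_mul]
        exact ⟨And.right, fun hu ↦ ⟨mul_ne_zero (sub_ne_zero.2 hu.ne') (exp_ne_zero _), hu⟩⟩
      simp [this]
    · filter_upwards [ae_restrict_mem measurableSet_Ioi] with u (hu : x < u)
      rw [← sub_mul]
      exact mul_nonneg (sub_nonneg.2 hu.le) (exp_pos _).le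
  rw [integral_sub hmomentInt hexpInt, hmoment, integral_const_mul] at hgap
  simpa [gaussianTail] using hgap

lemma gaussianTail_le {x : ℝ} (hx : 1 ≤ x) : gaussianTail x ≤ exp (-x ^ 2 / 2) := by
  nlinarith [mul_gaussianTail_lt (one_pos.trans_le hx), gaussianTail_pos x]

lemma div_one_add_sq_mul_exp_le_gaussianTail (x : ℝ) :
    x / (1 + x ^ 2) * exp (-x ^ 2 / 2) ≤ gaussianTail x := by
  set D : ℝ → ℝ := fun y ↦ gaussianTail y - y / (1 + y ^ 2) * exp (-y ^ 2 / 2)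
  have hD (y : ℝ) : HasDerivAt D (-(2 / (1 + y ^ 2) ^ 2 * exp (-y ^ 2 / 2))) y := by
    have hy : 1 + y ^ 2 ≠ 0 := by positivity
    have := (hasDerivAt_gaussianTail y).sub
      ((((hasDerivAt_id y).div ((hasDerivAt_pow 2 y).const_add 1) hy)).mul
        (hasDerivAt_exp_neg_sq_div_two y))
    refine this.congr_deriv ?_
    simp only [Pi.div_apply, id]
    field_simp
    ring
  have hanti : Antitone D := antitone_of_deriv_nonpos (fun y ↦ (hD y).differentiableAt)
    fun y ↦ (hD y).deriv ▸ neg_nonpos.2 (by positivity)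
  have hbound : ∀ᶠ y in atTop, |D y| ≤ exp (-y ^ 2 / 2) := by
    filter_upwards [eventually_ge_atTop 1] with y hy
    have hfrac : y / (1 + y ^ 2) ≤ 1 := (div_le_one (by positivity)).2 (by nlinarith)
    have hfrac' : 0 ≤ y / (1 + y ^ 2) := by positivity
    rw [abs_le]
    constructor <;> nlinarith [gaussianTail_le hy, gaussianTail_pos y, exp_pos (-y ^ 2 / 2)]
  have hlim : Tendsto D atTop (𝓝 0) :=
    squeeze_zero_norm' hbound tendsto_exp_neg_sq_div_two
  exact sub_nonneg.1 (hanti.le_of_tendsto hlim x)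

noncomputable def millsRatio (x : ℝ) : ℝ := exp (x ^ 2 / 2) * Q x

lemma Q_eq_inv_sqrt_mul_gaussianTail (x : ℝ) : Q x = (√(2 * π))⁻¹ * gaussianTail x := rfl

lemma exp_sq_div_two_mul_exp_neg (x : ℝ) : exp (x ^ 2 / 2) * exp (-x ^ 2 / 2) = 1 := by
  rw [← exp_add, neg_div, add_neg_cancel, exp_zero]

lemma hasDerivAt_millsRatio (x : ℝ) :
    HasDerivAt millsRatio (x * millsRatio x - (√(2 * π))⁻¹) x := by
  have hexp : HasDerivAt (fun y ↦ exp (y ^ 2 / 2)) (x * exp (x ^ 2 / 2)) x := by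
    convert ((hasDerivAt_pow 2 x).div_const 2).exp using 1
    ring
  refine (hexp.mul ((hasDerivAt_gaussianTail x).const_mul (√(2 * π))⁻¹)).congr_deriv ?_
  rw [millsRatio, Q_eq_inv_sqrt_mul_gaussianTail]
  linear_combination (-(√(2 * π))⁻¹) * exp_sq_div_two_mul_exp_neg x

lemma continuous_millsRatio : Continuous millsRatio :=
  continuous_iff_continuousAt.2 fun x ↦ (hasDerivAt_millsRatio x).continuousAt

lemma mul_millsRatio_lt {x : ℝ} (hx : 0 < x) : x * millsRatio x < (√(2 * π))⁻¹ := by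
  calc x * millsRatio x = (√(2 * π))⁻¹ * exp (x ^ 2 / 2) * (x * gaussianTail x) := by
        rw [millsRatio, Q_eq_inv_sqrt_mul_gaussianTail]; ring
    _ < (√(2 * π))⁻¹ * exp (x ^ 2 / 2) * exp (-x ^ 2 / 2) := by
        gcongr; exact mul_gaussianTail_lt hx
    _ = (√(2 * π))⁻¹ := by rw [mul_assoc, exp_sq_div_two_mul_exp_neg, mul_one]

lemma sq_div_one_add_sq_le_mul_millsRatio {x : ℝ} (hx : 0 ≤ x) :
    x ^ 2 / (1 + x ^ 2) * (√(2 * π))⁻¹ ≤ x * millsRatio x := by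
  calc x ^ 2 / (1 + x ^ 2) * (√(2 * π))⁻¹
      = (√(2 * π))⁻¹ * exp (x ^ 2 / 2) * (x * (x / (1 + x ^ 2) * exp (-x ^ 2 / 2))) := by
        linear_combination (-(x ^ 2 / (1 + x ^ 2) * (√(2 * π))⁻¹)) * exp_sq_div_two_mul_exp_neg x
    _ ≤ (√(2 * π))⁻¹ * exp (x ^ 2 / 2) * (x * gaussianTail x) := by
        gcongr; exact div_one_add_sq_mul_exp_le_gaussianTail x
    _ = x * millsRatio x := by rw [millsRatio, Q_eq_inv_sqrt_mul_gaussianTail]; ring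

lemma strictAntiOn_millsRatio : StrictAntiOn millsRatio (Ici 0) := by
  refine strictAntiOn_of_deriv_neg (convex_Ici 0) continuous_millsRatio.continuousOn fun x hx ↦ ?_
  rw [interior_Ici] at hx
  rw [(hasDerivAt_millsRatio x).deriv, sub_neg]
  exact mul_millsRatio_lt hx

lemma tendsto_mul_millsRatio :
    Tendsto (fun x ↦ x * millsRatio x) atTop (𝓝 (√(2 * π))⁻¹) := by
  have hfrac : Tendsto (fun x : ℝ ↦ x ^ 2 / (1 + x ^ 2)) atTop (𝓝 1) := by
    have h := (tendsto_const_nhds (x := (1 : ℝ))).sub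
      (tendsto_atTop_add_const_left _ 1 (tendsto_pow_atTop two_ne_zero)).inv_tendsto_atTop
    rw [sub_zero] at h
    refine h.congr fun x ↦ ?_
    simp only [Pi.inv_apply]
    field_simp
    ring
  refine tendsto_of_tendsto_of_tendsto_of_le_of_le'
    (by simpa only [one_mul] using hfrac.mul_const (√(2 * π))⁻¹) tendsto_const_nhds ?_ ?_
  · filter_upwards [eventually_ge_atTop 0] with x hx using sq_div_one_add_sq_le_mul_millsRatio hx
  · filter_upwards [eventually_gt_atTop 0] with x hx using (mul_millsRatio_lt hx).le

lemma mul_Q_div_sqrt_eq_iff (t c : ℝ) :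
    t * Q (t / √(2 * π)) = c * exp (-t ^ 2 / (4 * π)) ↔ t * millsRatio (t / √(2 * π)) = c := by
  have hsq : (t / √(2 * π)) ^ 2 / 2 = t ^ 2 / (4 * π) := by
    rw [div_pow, sq_sqrt (by positivity)]
    ring
  rw [millsRatio, hsq, neg_div, exp_neg, ← div_eq_mul_inv, eq_div_iff (exp_ne_zero _)]
  constructor <;> intro h <;> linear_combination h

lemma tendsto_mul_millsRatio_div_sqrt :
    Tendsto (fun t ↦ t * millsRatio (t / √(2 * π))) atTop (𝓝 1) := by
  have hs : 0 < √(2 * π) := by positivity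
  have h := (tendsto_mul_millsRatio.comp (tendsto_id.atTop_div_const hs)).const_mul √(2 * π)
  rw [mul_inv_cancel₀ hs.ne'] at h
  refine h.congr fun t ↦ ?_
  simp only [Function.comp_apply, id]
  field_simp

theorem stmt_12 (ε g₀ g q : ℝ) (hε0 : 0 < ε) (hε1 : ε < 1) (hg₀ : 0 < g₀)
    (hg₀eq : g₀ * Q (g₀ / Real.sqrt (2*π)) = (1 - ε) * Real.exp (-g₀^2/(4*π)))
    (hg₀uniq : ∀ g' : ℝ, 0 < g' →
      g' * Q (g' / Real.sqrt (2*π)) = (1 - ε) * Real.exp (-g'^2/(4*π)) → g' = g₀)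
    (hg : g₀ ≤ g) (hq : 0 < q)
    (heq : g * Real.exp (q^2/2) * Q q = 1 - ε) :
    g / Real.sqrt (2*π) ≤ q ∧ q ≤ g / ((1 - ε) * Real.sqrt (2*π)) := by
  have hs : 0 < √(2 * π) := by positivity
  have hg0 : 0 < g := hg₀.trans_le hg
  have hmills : g * millsRatio q = 1 - ε := by rw [millsRatio, ← mul_assoc]; exact heq
  have hthreshold : 1 - ε ≤ g * millsRatio (g / √(2 * π)) := by
    by_contra! hlt
    obtain ⟨c, hgc : g ≤ c, hc⟩ := isPreconnected_Ici.intermediate_value_Ico self_mem_Ici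
      (le_principal_iff.2 (Ici_mem_atTop g))
      (continuous_id.mul (continuous_millsRatio.comp (continuous_id.div_const _))).continuousOn
      tendsto_mul_millsRatio_div_sqrt ⟨hlt.le, by linarith⟩
    have hcg₀ : c = g₀ := hg₀uniq c (hg0.trans_le hgc) ((mul_Q_div_sqrt_eq_iff c _).2 hc)
    obtain rfl : g = g₀ := by linarith
    exact hlt.ne ((mul_Q_div_sqrt_eq_iff g _).1 hg₀eq)
  refine ⟨?_, ?_⟩
  · refine (strictAntiOn_millsRatio.le_iff_ge (mem_Ici.2 hq.le) (mem_Ici.2 (by positivity))).1 ?_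
    exact le_of_mul_le_mul_left (hmills.trans_le hthreshold) hg0
  · rw [le_div_iff₀ (mul_pos (sub_pos.2 hε1) hs)]
    calc q * ((1 - ε) * √(2 * π)) = g * (q * millsRatio q) * √(2 * π) := by
          rw [← hmills]; ring
      _ ≤ g * (√(2 * π))⁻¹ * √(2 * π) := by gcongr; exact (mul_millsRatio_lt hq).le
      _ = g := by field_simp
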